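/- arXiv:2010.05448 — 2 statements merged into one kernel-verified Lean document; each statement's English description precedes it below -/
import Mathlib

section
/- Let G be a commutative group, g ∈ G, and let x, y be natural numbers that are coprime. If w₁, w₂ ∈ G satisfy w₁^x = g and w₂^y = g, then there exists an element w ∈ G with w^(x·y) = g; concretely, if a, b ∈ ℤ are Bézout coefficients with a·x + b·y = 1, then w = w₁^b · w₂^a satisfies w^(x·y) = g (Shamir's trick for aggregating roots). -/
theorem zpow_mul_zpow_zpow_mul_eq_of_bezout {G : Type*} [CommGroup G] {g w₁ w₂ : G}
    {x y a b : ℤ} (h₁ : w₁ ^ x = g) (h₂ : w₂ ^ y = g) (hab : a * x + b * y = 1) :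
    (w₁ ^ b * w₂ ^ a) ^ (x * y) = g :=
  calc (w₁ ^ b * w₂ ^ a) ^ (x * y) = (w₁ ^ x) ^ (b * y) * (w₂ ^ y) ^ (a * x) := by
        simp only [mul_zpow, ← zpow_mul]; ring_nf
    _ = g ^ (a * x + b * y) := by rw [h₁, h₂, ← zpow_add, add_comm]
    _ = g := by rw [hab, zpow_one]

theorem shamir_trick_general {G : Type*} [CommGroup G] (g : G) (x y : ℕ)
    (w₁ w₂ : G) (h₁ : w₁ ^ x = g) (h₂ : w₂ ^ y = g)
    (a b : ℤ) (hab : a * (x : ℤ) + b * (y : ℤ) = 1) :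
    (∃ w : G, w ^ (x * y) = g) ∧ (w₁ ^ b * w₂ ^ a) ^ (x * y) = g := by
  have root : (w₁ ^ b * w₂ ^ a) ^ (x * y) = g := by
    rw [← zpow_natCast, Nat.cast_mul]
    exact zpow_mul_zpow_zpow_mul_eq_of_bezout (by rwa [zpow_natCast]) (by rwa [zpow_natCast]) hab
  exact ⟨⟨_, root⟩, root⟩

/-- Shamir's trick: from an `x`-th root `w₁` and a `y`-th root `w₂` of `g`
(with `x`, `y` coprime), one obtains an `(x·y)`-th root of `g`; concretely,
for Bézout coefficients `a·x + b·y = 1`, the element `w₁^b * w₂^a` works. -/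
theorem shamir_trick {G : Type*} [CommGroup G] (g : G) (x y : ℕ)
    (hxy : Nat.Coprime x y) (w₁ w₂ : G) (h₁ : w₁ ^ x = g) (h₂ : w₂ ^ y = g)
    (a b : ℤ) (hab : a * (x : ℤ) + b * (y : ℤ) = 1) :
    (∃ w : G, w ^ (x * y) = g) ∧ (w₁ ^ b * w₂ ^ a) ^ (x * y) = g :=
  shamir_trick_general g x y w₁ w₂ h₁ h₂ a b hab
end

section
/- Let G be a commutative group, A' ∈ G, and let s, d be coprime natural numbers. If w ∈ G satisfies w^s = (A')^d (i.e., w is the membership witness of an element with prime representative s relative to the old accumulator A = (A')^d), then there exists w' ∈ G with (w')^s = A'; concretely, for Bézout coefficients a·s + b·d = 1, the element w' = w^b · (A')^a satisfies (w')^s = A'. -/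
theorem zpow_mul_zpow_zpow_eq_of_bezout {G : Type*} [CommGroup G] {w x : G} {s d a b : ℤ}
    (hw : w ^ s = x ^ d) (hab : a * s + b * d = 1) : (w ^ b * x ^ a) ^ s = x :=
  calc (w ^ b * x ^ a) ^ s = (w ^ s) ^ b * x ^ (a * s) := by
        rw [mul_zpow, ← zpow_mul, ← zpow_mul, ← zpow_mul, mul_comm b]
    _ = x ^ (a * s + b * d) := by rw [hw, ← zpow_mul, zpow_add, mul_comm, mul_comm d]
    _ = x := by rw [hab, zpow_one]

theorem witness_update_after_deletion_general {G : Type*} [CommGroup G] (A' : G)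
    (s d : ℕ) (w : G) (hw : w ^ s = A' ^ d)
    (a b : ℤ) (hab : a * (s : ℤ) + b * (d : ℤ) = 1) :
    (∃ w' : G, w' ^ s = A') ∧ (w ^ b * A' ^ a) ^ s = A' := by
  have hw' : w ^ (s : ℤ) = A' ^ (d : ℤ) := by rw [zpow_natCast, zpow_natCast, hw]
  have key : (w ^ b * A' ^ a) ^ s = A' := by
    rw [← zpow_natCast]
    exact zpow_mul_zpow_zpow_eq_of_bezout hw' hab
  exact ⟨⟨_, key⟩, key⟩

/-- Witness update after batch deletion via Shamir's trick: if `w^s = (A')^d`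
with `s`, `d` coprime, then there is `w'` with `(w')^s = A'`; concretely, for
Bézout coefficients `a·s + b·d = 1`, the element `w' = w^b * (A')^a` works. -/
theorem witness_update_after_deletion {G : Type*} [CommGroup G] (A' : G)
    (s d : ℕ) (hsd : Nat.Coprime s d) (w : G) (hw : w ^ s = A' ^ d)
    (a b : ℤ) (hab : a * (s : ℤ) + b * (d : ℤ) = 1) :
    (∃ w' : G, w' ^ s = A') ∧ (w ^ b * A' ^ a) ^ s = A' :=
  witness_update_after_deletion_general A' s d w hw a b hab
end
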